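/- Let Λ denote the completed Riemann zeta function and let χ be a primitive quadratic Dirichlet character modulo N with N > 1 (so χ² is trivial and χ ≠ 1), with entire completed Dirichlet L-function Λ(χ,·). Then the simple pole of Λ(2s) at s = 1/2 is cancelled by the zero at s = 1/2 of the odd difference Λ(χ, 1/2−s) − Λ(χ, s−1/2): as s → 1/2 along the punctured neighborhood filter in ℂ, the function s ↦ Λ(2s)·(Λ(χ, 1/2−s) − Λ(χ, s−1/2)) tends to −Λ'(χ, 0), the negative of the derivative of Λ(χ,·) at 0. -/
import Mathlib

open Filter Topology DirichletCharacter

/-- For a primitive quadratic Dirichlet character `χ` modulo `N > 1` (so `χ² = 1`,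
`χ ≠ 1`), the simple pole of `Λ(2s)` at `s = 1/2` is cancelled by the zero at
`s = 1/2` of the odd difference `Λ(χ, 1/2−s) − Λ(χ, s−1/2)`:
`Λ(2s)·(Λ(χ, 1/2−s) − Λ(χ, s−1/2)) → −Λ'(χ, 0)` as `s → 1/2`. -/
theorem stmt19 {N : ℕ} [NeZero N] (hN : 1 < N) (χ : DirichletCharacter ℂ N)
    (hprim : χ.IsPrimitive) (hquad : χ ^ 2 = 1) (hne : χ ≠ 1) :
    Tendsto (fun s : ℂ =>
        completedRiemannZeta (2*s) *
          (completedLFunction χ (1/2 - s) - completedLFunction χ (s - 1/2)))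
      (𝓝[≠] (1/2)) (𝓝 (-(deriv (completedLFunction χ) 0))) := by
  set d : ℂ := deriv (completedLFunction χ) 0 with hd
  have hdiff : Differentiable ℂ (completedLFunction χ) :=
    differentiable_completedLFunction hne
  set g : ℂ → ℂ := fun s => completedLFunction χ (1/2 - s) - completedLFunction χ (s - 1/2)
    with hg
  -- derivative of g at 1/2 is -2d
  have h0 : (1/2 - 1/2 : ℂ) = 0 := by norm_num
  have houter : HasDerivAt (completedLFunction χ) d ((1:ℂ)/2 - 1/2) :=
    h0 ▸ (hdiff 0).hasDerivAt
  have h1 : HasDerivAt (fun s : ℂ => completedLFunction χ (1/2 - s)) (-d) (1/2) := by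
    have := houter.comp_const_sub (1/2 : ℂ) (1/2 : ℂ)
    norm_num at this
    simpa using this
  have h2 : HasDerivAt (fun s : ℂ => completedLFunction χ (s - 1/2)) d (1/2) := by
    have := houter.comp_sub_const (1/2 : ℂ) (1/2 : ℂ)
    norm_num at this
    simpa using this
  have hgd : HasDerivAt g (-d - d) (1/2) := h1.sub h2
  have hg0 : g (1/2) = 0 := by simp [hg]
  -- slope limit
  have hslope : Tendsto (fun s : ℂ => g s / (s - 1/2)) (𝓝[≠] (1/2)) (𝓝 (-d - d)) := by
    have := hasDerivAt_iff_tendsto_slope.mp hgd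
    refine this.congr (fun s => ?_)
    rw [slope_def_field, hg0, sub_zero]
  -- residue limit for Λ(2s)
  have hmap : Tendsto (fun s : ℂ => 2 * s) (𝓝[≠] (1/2)) (𝓝[≠] (1 : ℂ)) := by
    refine tendsto_nhdsWithin_iff.mpr ⟨?_, ?_⟩
    · have : Tendsto (fun s : ℂ => 2 * s) (𝓝 (1/2)) (𝓝 (2 * (1/2))) :=
        (continuous_const.mul continuous_id).tendsto _
      simpa using this.mono_left nhdsWithin_le_nhds
    · filter_upwards [self_mem_nhdsWithin] with s hs
      simp only [Set.mem_compl_iff, Set.mem_singleton_iff] at hs ⊢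
      intro h
      apply hs
      have h2 : (2:ℂ) * s = 2 * (1/2) := by rw [h]; norm_num
      exact mul_left_cancel₀ two_ne_zero h2
  have hres : Tendsto (fun s : ℂ => (2*s - 1) * completedRiemannZeta (2*s))
      (𝓝[≠] (1/2)) (𝓝 1) :=
    (completedRiemannZeta_residue_one.comp hmap)
  -- combine
  have hcomb : Tendsto (fun s : ℂ =>
      ((2*s - 1) * completedRiemannZeta (2*s)) * (g s / (s - 1/2) / 2))
      (𝓝[≠] (1/2)) (𝓝 (1 * ((-d - d) / 2))) :=
    hres.mul (hslope.div_const 2)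
  have : (1 : ℂ) * ((-d - d) / 2) = -d := by ring
  rw [this] at hcomb
  refine hcomb.congr' ?_
  filter_upwards [self_mem_nhdsWithin] with s hs
  have hs' : s - 1/2 ≠ 0 := sub_ne_zero.mpr hs
  have h2s : (2*s - 1 : ℂ) ≠ 0 := by
    intro h; apply hs'
    have : (2:ℂ) * (s - 1/2) = 0 := by rw [mul_sub]; rw [← h]; ring
    exact (mul_eq_zero.mp this).resolve_left two_ne_zero
  have hdv : g s / (s - 1/2) / 2 = g s / (2*s - 1) := by
    rw [div_div]; ring_nf
  rw [hdv, mul_comm (2*s - 1), mul_assoc, mul_comm (2*s - 1) _, div_mul_cancel₀ _ h2s]
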